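/- (Encoding faithfulness) For any second-level atomic system A and any atom p: ⊢_A p (p derivable in the atomic system A) if and only if ⌊A⌋ ⊢ p in IPL, where ⌊A⌋ is the set of definite formulae encoding the rules of A. -/

import Mathlib

/-! ## hereditary Harrop fragment -/

inductive Atm : Type
  | bot : Atm
  | at_ : ℕ → Atm

mutual
  inductive Df : Type
    | atom : Atm → Df
    | imp : Gf → Atm → Df
    | and : Df → Df → Df
  inductive Gf : Type
    | atom : Atm → Gf
    | dimp : Df → Gf → Gf
    | and : Gf → Gf → Gf
    | or : Gf → Gf → Gf
end

noncomputable instance : DecidableEq Df := Classical.decEq _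
noncomputable instance : DecidableEq Atm := Classical.decEq _

/-- A program is a finite set of definite formulae. -/
abbrev Program := Finset Df

/-- `[P]` : closure of a program under decomposing conjunctions. -/
inductive InClos (P : Program) : Df → Prop
  | mem {d} : d ∈ P → InClos P d
  | andl {d₁ d₂} : InClos P (Df.and d₁ d₂) → InClos P d₁
  | andr {d₁ d₂} : InClos P (Df.and d₁ d₂) → InClos P d₂

/-- An interpretation: a monotone map from programs to sets of atoms. -/
structure Interp where
  val : Program → Set Atm
  mono : ∀ {P Q : Program}, P ⊆ Q → val P ⊆ val Q

/-- Pointwise order on interpretations. -/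
def Interp.le (I J : Interp) : Prop := ∀ P, I.val P ⊆ J.val P

/-- Satisfaction `I, P ⊨ G`. -/
def sat (I : Interp) : Program → Gf → Prop
  | P, Gf.atom a => a ∈ I.val P
  | P, Gf.dimp d g => sat I (insert d P) g
  | P, Gf.and g₁ g₂ => sat I P g₁ ∧ sat I P g₂
  | P, Gf.or g₁ g₂ => sat I P g₁ ∨ sat I P g₂

theorem InClos.mono' {P Q : Program} (h : P ⊆ Q) : ∀ {d}, InClos P d → InClos Q d := by
  intro d hd
  induction hd with
  | mem hm => exact InClos.mem (h hm)
  | andl _ ih => exact InClos.andl ih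
  | andr _ ih => exact InClos.andr ih

theorem sat_mono (I : Interp) : ∀ (g : Gf) {P Q : Program}, P ⊆ Q → sat I P g → sat I Q g
  | Gf.atom _, _, _, h, hs => I.mono h hs
  | Gf.dimp d g, _, _, h, hs => sat_mono I g (Finset.insert_subset_insert d h) hs
  | Gf.and g₁ g₂, _, _, h, hs => ⟨sat_mono I g₁ h hs.1, sat_mono I g₂ h hs.2⟩
  | Gf.or g₁ g₂, _, _, h, hs =>
      hs.elim (fun x => Or.inl (sat_mono I g₁ h x)) (fun x => Or.inr (sat_mono I g₂ h x))

/-- The raw unfolding operator. -/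
def Traw (I : Interp) (P : Program) : Set Atm :=
  {a | InClos P (Df.atom a)} ∪
  {a | ∃ g, InClos P (Df.imp g a) ∧ sat I P g} ∪
  {a | sat I P (Gf.atom Atm.bot)}

/-- `T` maps interpretations to interpretations. -/
def T (I : Interp) : Interp := by
  refine ⟨Traw I, ?_⟩
  intro P Q h a ha
  simp only [Traw, Set.mem_union, Set.mem_setOf_eq] at ha ⊢
  rcases ha with (h1 | ⟨g, hg, hs⟩) | h3
  · exact Or.inl (Or.inl (InClos.mono' h h1))
  · exact Or.inl (Or.inr ⟨g, InClos.mono' h hg, sat_mono I _ h hs⟩)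
  · exact Or.inr (sat_mono I _ h h3)

/-- The bottom interpretation. -/
def Ibot : Interp := ⟨fun _ => ∅, fun _ => Set.Subset.refl _⟩

/-- Iterates of `T` from the bottom interpretation. -/
def Tn : ℕ → Interp
  | 0 => Ibot
  | n + 1 => T (Tn n)

/-- `T^ω I_⊥`, the least fixed point of `T`. -/
def Tomega : Interp :=
  ⟨fun P => ⋃ n, (Tn n).val P, fun h => Set.iUnion_mono fun n => (Tn n).mono h⟩

/-- The pointwise supremum of a family of interpretations. -/
def chainSup (I : ℕ → Interp) : Interp :=
  ⟨fun P => ⋃ n, (I n).val P, fun h => Set.iUnion_mono fun n => (I n).mono h⟩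

/-- Operational semantics for hHLP. -/
inductive Exec : Program → Gf → Prop
  | inn {P a} : InClos P (Df.atom a) → Exec P (Gf.atom a)
  | clause {P g a} : InClos P (Df.imp g a) → Exec P g → Exec P (Gf.atom a)
  | efq {P g} : Exec P (Gf.atom Atm.bot) → Exec P g
  | orl {P g₁ g₂} : Exec P g₁ → Exec P (Gf.or g₁ g₂)
  | orr {P g₁ g₂} : Exec P g₂ → Exec P (Gf.or g₁ g₂)
  | and {P g₁ g₂} : Exec P g₁ → Exec P g₂ → Exec P (Gf.and g₁ g₂)
  | load {P d g} : Exec (insert d P) g → Exec P (Gf.dimp d g)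

/-! ## Formulae of IPL and natural deduction NJ -/

inductive Fml : Type
  | atom : ℕ → Fml
  | bot : Fml
  | and : Fml → Fml → Fml
  | or : Fml → Fml → Fml
  | imp : Fml → Fml → Fml

/-- Gentzen's natural deduction system NJ for IPL. -/
inductive NJ : Set Fml → Fml → Prop
  | ax {Γ φ} : φ ∈ Γ → NJ Γ φ
  | andI {Γ φ ψ} : NJ Γ φ → NJ Γ ψ → NJ Γ (Fml.and φ ψ)
  | andE1 {Γ φ ψ} : NJ Γ (Fml.and φ ψ) → NJ Γ φ
  | andE2 {Γ φ ψ} : NJ Γ (Fml.and φ ψ) → NJ Γ ψ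
  | orI1 {Γ φ ψ} : NJ Γ φ → NJ Γ (Fml.or φ ψ)
  | orI2 {Γ φ ψ} : NJ Γ ψ → NJ Γ (Fml.or φ ψ)
  | orE {Γ φ ψ χ} : NJ Γ (Fml.or φ ψ) → NJ (insert φ Γ) χ → NJ (insert ψ Γ) χ → NJ Γ χ
  | impI {Γ φ ψ} : NJ (insert φ Γ) ψ → NJ Γ (Fml.imp φ ψ)
  | impE {Γ φ ψ} : NJ Γ (Fml.imp φ ψ) → NJ Γ φ → NJ Γ ψ
  | botE {Γ φ} : NJ Γ Fml.bot → NJ Γ φ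

def Atm.toFml : Atm → Fml
  | Atm.bot => Fml.bot
  | Atm.at_ n => Fml.atom n

mutual
  def Df.toFml : Df → Fml
    | Df.atom a => a.toFml
    | Df.imp g a => Fml.imp g.toFml a.toFml
    | Df.and d₁ d₂ => Fml.and d₁.toFml d₂.toFml
  def Gf.toFml : Gf → Fml
    | Gf.atom a => a.toFml
    | Gf.dimp d g => Fml.imp d.toFml g.toFml
    | Gf.and g₁ g₂ => Fml.and g₁.toFml g₂.toFml
    | Gf.or g₁ g₂ => Fml.or g₁.toFml g₂.toFml
end

/-! ## Base-extension semantics -/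

/-- A (properly second-level) atomic rule: premisses are pairs of a finite set of
dischargeable atoms and an atomic conclusion; the conclusion is an atom. -/
structure ARule where
  prems : List (Finset ℕ × ℕ)
  concl : ℕ

/-- Derivability of an atom from a set of atoms in an atomic system. -/
inductive Deriv (B : Set ARule) : Set ℕ → ℕ → Prop
  | hyp {S p} : p ∈ S → Deriv B S p
  | app {S} {r : ARule} : r ∈ B →
      (∀ pr ∈ r.prems, Deriv B (S ∪ ↑pr.1) pr.2) → Deriv B S r.concl

/-- Sandqvist's support relation `⊩_B φ` (over the basis of all second-level
atomic systems). -/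
def Supp : Set ARule → Fml → Prop
  | B, Fml.atom n => Deriv B ∅ n
  | B, Fml.bot => ∀ n : ℕ, Deriv B ∅ n
  | B, Fml.and φ ψ => Supp B φ ∧ Supp B ψ
  | B, Fml.imp φ ψ => ∀ C, B ⊆ C → Supp C φ → Supp C ψ
  | B, Fml.or φ ψ => ∀ C, B ⊆ C → ∀ p : ℕ,
      (∀ D, C ⊆ D → Supp D φ → Deriv D ∅ p) →
      (∀ D, C ⊆ D → Supp D ψ → Deriv D ∅ p) → Deriv C ∅ p

/-- Support with open assumptions: `Γ ⊩_B φ`. -/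
def SuppCtx (B : Set ARule) (Γ : Set Fml) (φ : Fml) : Prop :=
  ∀ C, B ⊆ C → (∀ ψ ∈ Γ, Supp C ψ) → Supp C φ

/-! ## The bespoke base `N` -/

/-- Atoms occurring in a formula. -/
def atomsIn : Fml → Set ℕ
  | Fml.atom n => {n}
  | Fml.bot => ∅
  | Fml.and φ ψ => atomsIn φ ∪ atomsIn ψ
  | Fml.or φ ψ => atomsIn φ ∪ atomsIn ψ
  | Fml.imp φ ψ => atomsIn φ ∪ atomsIn ψ

/-- A flattening map `♭` is good for a set `S` of formulae if it is injective,
the identity on atoms, and assigns fresh atoms to non-atomic formulae of `S`. -/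
def FlatGood (fl : Fml → ℕ) (S : Set Fml) : Prop :=
  Function.Injective fl ∧ (∀ n, fl (Fml.atom n) = n) ∧
  (∀ φ ∈ S, (∀ n, φ ≠ Fml.atom n) → ∀ ψ ∈ S, fl φ ∉ atomsIn ψ)

/-- `S` is closed under subformulae. -/
def SubClosed (S : Set Fml) : Prop :=
  (∀ φ ψ, Fml.and φ ψ ∈ S → φ ∈ S ∧ ψ ∈ S) ∧
  (∀ φ ψ, Fml.or φ ψ ∈ S → φ ∈ S ∧ ψ ∈ S) ∧
  (∀ φ ψ, Fml.imp φ ψ ∈ S → φ ∈ S ∧ ψ ∈ S)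

/-- The rules of the bespoke base `N` emulating NJ via flattened atoms, for the
formulae occurring in `S`. -/
inductive NRule (fl : Fml → ℕ) (S : Set Fml) : ARule → Prop
  | andI {φ ψ} : Fml.and φ ψ ∈ S →
      NRule fl S ⟨[(∅, fl φ), (∅, fl ψ)], fl (Fml.and φ ψ)⟩
  | andE1 {φ ψ} : Fml.and φ ψ ∈ S →
      NRule fl S ⟨[(∅, fl (Fml.and φ ψ))], fl φ⟩
  | andE2 {φ ψ} : Fml.and φ ψ ∈ S →
      NRule fl S ⟨[(∅, fl (Fml.and φ ψ))], fl ψ⟩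
  | orI1 {φ ψ} : Fml.or φ ψ ∈ S →
      NRule fl S ⟨[(∅, fl φ)], fl (Fml.or φ ψ)⟩
  | orI2 {φ ψ} : Fml.or φ ψ ∈ S →
      NRule fl S ⟨[(∅, fl ψ)], fl (Fml.or φ ψ)⟩
  | orE {φ ψ χ} : Fml.or φ ψ ∈ S → χ ∈ S →
      NRule fl S ⟨[(∅, fl (Fml.or φ ψ)), ({fl φ}, fl χ), ({fl ψ}, fl χ)], fl χ⟩
  | impI {φ ψ} : Fml.imp φ ψ ∈ S →
      NRule fl S ⟨[({fl φ}, fl ψ)], fl (Fml.imp φ ψ)⟩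
  | impE {φ ψ} : Fml.imp φ ψ ∈ S →
      NRule fl S ⟨[(∅, fl φ), (∅, fl (Fml.imp φ ψ))], fl ψ⟩
  | botE {φ} : φ ∈ S →
      NRule fl S ⟨[(∅, fl Fml.bot)], fl φ⟩

/-! ## Encoding atomic systems as formulae / programs -/

def conjAtoms : ℕ → List ℕ → Fml
  | a, [] => Fml.atom a
  | a, b :: l => Fml.and (Fml.atom a) (conjAtoms b l)

noncomputable def encPrem (pr : Finset ℕ × ℕ) : Fml :=
  match pr.1.toList with
  | [] => Fml.atom pr.2
  | a :: l => Fml.imp (conjAtoms a l) (Fml.atom pr.2)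

def conjFrm : Fml → List Fml → Fml
  | f, [] => f
  | f, g :: l => Fml.and f (conjFrm g l)

/-- Encoding `⌊-⌋` of a second-level atomic rule as a formula of IPL. -/
noncomputable def encRule (r : ARule) : Fml :=
  match r.prems with
  | [] => Fml.atom r.concl
  | q :: qs => Fml.imp (conjFrm (encPrem q) (qs.map encPrem)) (Fml.atom r.concl)

def conjD : Df → List Df → Df
  | d, [] => d
  | d, e :: l => Df.and d (conjD e l)

def conjG : Gf → List Gf → Gf
  | g, [] => g
  | g, h :: l => Gf.and g (conjG h l)

noncomputable def encPremG (pr : Finset ℕ × ℕ) : Gf :=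
  match pr.1.toList with
  | [] => Gf.atom (Atm.at_ pr.2)
  | a :: l =>
      Gf.dimp (conjD (Df.atom (Atm.at_ a)) (l.map fun n => Df.atom (Atm.at_ n)))
        (Gf.atom (Atm.at_ pr.2))

/-- Encoding of a second-level atomic rule as a definite formula. -/
noncomputable def encRuleD (r : ARule) : Df :=
  match r.prems with
  | [] => Df.atom (Atm.at_ r.concl)
  | q :: qs => Df.imp (conjG (encPremG q) (qs.map encPremG)) (Atm.at_ r.concl)

/-!
Sets of atoms, ordered by inclusion, form a Kripke model of IPL in which an atom is forced at `S`
when it is `A`-derivable from the hypotheses `S`. Each `⌊r⌋` with `r ∈ A` is forced everywhere,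
since a forced encoded premiss `⌊Σ⌋ → q` at `S` yields a derivation of `q` from `S ∪ Σ`; Kripke
soundness of NJ then turns `⌊A⌋ ⊢ p` into `⊢_A p`. Conversely, an `A`-derivation from hypotheses
`S` translates rule by rule into an NJ-derivation from `⌊A⌋ ∪ S`, the discharge of `Σ` becoming an
`→`-introduction of `⌊Σ⌋`.
-/

theorem Deriv.mono {A : Set ARule} {S S' : Set ℕ} {p : ℕ} (h : Deriv A S p) (hS : S ⊆ S') :
    Deriv A S' p := by
  induction h generalizing S' with
  | hyp hp => exact Deriv.hyp (hS hp)
  | app hr _ ih =>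
    exact Deriv.app hr fun pr hpr => ih pr hpr (Set.union_subset_union_left _ hS)

theorem NJ.mono {Γ Δ : Set Fml} {φ : Fml} (h : NJ Γ φ) (hΓ : Γ ⊆ Δ) : NJ Δ φ := by
  induction h generalizing Δ with
  | ax hm => exact NJ.ax (hΓ hm)
  | andI _ _ ih₁ ih₂ => exact NJ.andI (ih₁ hΓ) (ih₂ hΓ)
  | andE1 _ ih => exact NJ.andE1 (ih hΓ)
  | andE2 _ ih => exact NJ.andE2 (ih hΓ)
  | orI1 _ ih => exact NJ.orI1 (ih hΓ)
  | orI2 _ ih => exact NJ.orI2 (ih hΓ)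
  | orE _ _ _ ih ih₁ ih₂ =>
    exact NJ.orE (ih hΓ) (ih₁ (Set.insert_subset_insert hΓ)) (ih₂ (Set.insert_subset_insert hΓ))
  | impI _ ih => exact NJ.impI (ih (Set.insert_subset_insert hΓ))
  | impE _ _ ih₁ ih₂ => exact NJ.impE (ih₁ hΓ) (ih₂ hΓ)
  | botE _ ih => exact NJ.botE (ih hΓ)

theorem conjAtoms_eq_conjFrm (a : ℕ) (l : List ℕ) :
    conjAtoms a l = conjFrm (Fml.atom a) (l.map Fml.atom) := by
  induction l generalizing a with
  | nil => rfl
  | cons b l ih => rw [conjAtoms, ih]; rfl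

theorem NJ.conjFrm_iff {Γ : Set Fml} (f : Fml) (l : List Fml) :
    NJ Γ (conjFrm f l) ↔ ∀ g ∈ f :: l, NJ Γ g := by
  induction l generalizing f with
  | nil => simp [conjFrm]
  | cons g l ih =>
    rw [conjFrm, List.forall_mem_cons, ← ih]
    exact ⟨fun h => ⟨h.andE1, h.andE2⟩, fun h => h.1.andI h.2⟩

section Kripke

variable {W : Type*} [Preorder W]

def Forces (V : ℕ → W → Prop) : Fml → W → Prop
  | Fml.atom n, w => V n w
  | Fml.bot, _ => False
  | Fml.and φ ψ, w => Forces V φ w ∧ Forces V ψ w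
  | Fml.or φ ψ, w => Forces V φ w ∨ Forces V ψ w
  | Fml.imp φ ψ, w => ∀ w', w ≤ w' → Forces V φ w' → Forces V ψ w'

variable {V : ℕ → W → Prop}

theorem Forces.mono (hV : ∀ n, Monotone (V n)) :
    ∀ {φ : Fml} {w w' : W}, w ≤ w' → Forces V φ w → Forces V φ w'
  | Fml.atom n, _, _, hw, h => hV n hw h
  | Fml.bot, _, _, _, h => h.elim
  | Fml.and _ _, _, _, hw, h => ⟨Forces.mono hV hw h.1, Forces.mono hV hw h.2⟩
  | Fml.or _ _, _, _, hw, h => h.imp (Forces.mono hV hw) (Forces.mono hV hw)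
  | Fml.imp _ _, _, _, hw, h => fun w'' hw' => h w'' (hw.trans hw')

theorem forces_conjFrm {w : W} (f : Fml) (l : List Fml) :
    Forces V (conjFrm f l) w ↔ ∀ g ∈ f :: l, Forces V g w := by
  induction l generalizing f with
  | nil => simp [conjFrm]
  | cons g l ih => rw [conjFrm, List.forall_mem_cons, ← ih]; rfl

theorem NJ.forces (hV : ∀ n, Monotone (V n)) {Γ : Set Fml} {φ : Fml} (h : NJ Γ φ) {w : W}
    (hΓ : ∀ ψ ∈ Γ, Forces V ψ w) : Forces V φ w := by
  induction h generalizing w with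
  | ax hm => exact hΓ _ hm
  | andI _ _ ih₁ ih₂ => exact ⟨ih₁ hΓ, ih₂ hΓ⟩
  | andE1 _ ih => exact (ih hΓ).1
  | andE2 _ ih => exact (ih hΓ).2
  | orI1 _ ih => exact Or.inl (ih hΓ)
  | orI2 _ ih => exact Or.inr (ih hΓ)
  | orE _ _ _ ih ih₁ ih₂ =>
    rcases ih hΓ with h | h
    · exact ih₁ (Set.forall_mem_insert.2 ⟨h, hΓ⟩)
    · exact ih₂ (Set.forall_mem_insert.2 ⟨h, hΓ⟩)
  | impI _ ih =>
    exact fun w' hw hφ =>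
      ih (Set.forall_mem_insert.2 ⟨hφ, fun ψ hψ => Forces.mono hV hw (hΓ ψ hψ)⟩)
  | impE _ _ ih₁ ih₂ => exact ih₁ hΓ _ le_rfl (ih₂ hΓ)
  | botE _ ih => exact (ih hΓ).elim

end Kripke

section Soundness

variable {A : Set ARule}

theorem Deriv.monotone (n : ℕ) : Monotone fun S : Set ℕ => Deriv A S n :=
  fun _ _ hS hd => hd.mono hS

theorem deriv_of_forces_encPrem {S : Set ℕ} {pr : Finset ℕ × ℕ}
    (h : Forces (fun n S => Deriv A S n) (encPrem pr) S) : Deriv A (S ∪ ↑pr.1) pr.2 := by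
  rcases hl : pr.1.toList with _ | ⟨a, l⟩
  · rw [encPrem, hl] at h
    exact Deriv.mono h Set.subset_union_left
  · rw [encPrem, hl] at h
    refine h _ Set.subset_union_left ?_
    rw [conjAtoms_eq_conjFrm, forces_conjFrm, ← List.map_cons, List.forall_mem_map]
    exact fun n hn => Deriv.hyp (Or.inr (Finset.mem_toList.mp (hl ▸ hn)))

theorem forces_encRule {r : ARule} (hr : r ∈ A) (S : Set ℕ) :
    Forces (fun n S => Deriv A S n) (encRule r) S := by
  rcases hp : r.prems with _ | ⟨q, qs⟩
  · rw [encRule, hp]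
    exact Deriv.app hr (by simp [hp])
  · rw [encRule, hp]
    intro S' _ hprems
    rw [forces_conjFrm, ← List.map_cons, List.forall_mem_map] at hprems
    exact Deriv.app hr fun pr hpr => deriv_of_forces_encPrem (hprems pr (hp ▸ hpr))

end Soundness

section Completeness

variable {Γ : Set Fml}

theorem NJ.encPrem_of_forall_superset {pr : Finset ℕ × ℕ}
    (h : ∀ Δ, Γ ⊆ Δ → (∀ n ∈ pr.1, NJ Δ (Fml.atom n)) → NJ Δ (Fml.atom pr.2)) :
    NJ Γ (encPrem pr) := by
  rcases hl : pr.1.toList with _ | ⟨a, l⟩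
  · rw [encPrem, hl]
    rw [Finset.toList_eq_nil] at hl
    exact h Γ subset_rfl (by simp [hl])
  · rw [encPrem, hl]
    refine NJ.impI (h _ (Set.subset_insert _ _) fun n hn => ?_)
    rw [conjAtoms_eq_conjFrm]
    have hconj := NJ.ax (Set.mem_insert (conjFrm (Fml.atom a) (l.map Fml.atom)) Γ)
    rw [NJ.conjFrm_iff, ← List.map_cons, List.forall_mem_map] at hconj
    exact hconj n (hl ▸ Finset.mem_toList.mpr hn)

theorem NJ.concl_of_encRule {r : ARule} (hr : NJ Γ (encRule r))
    (hprems : ∀ pr ∈ r.prems, NJ Γ (encPrem pr)) : NJ Γ (Fml.atom r.concl) := by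
  rcases hp : r.prems with _ | ⟨q, qs⟩
  · rwa [encRule, hp] at hr
  · rw [encRule, hp] at hr
    refine hr.impE ((NJ.conjFrm_iff _ _).2 ?_)
    rw [← List.map_cons, List.forall_mem_map]
    exact fun pr hpr => hprems pr (hp ▸ hpr)

theorem Deriv.nj {A : Set ARule} {S : Set ℕ} {p : ℕ} (h : Deriv A S p)
    (hA : encRule '' A ⊆ Γ) (hS : ∀ n ∈ S, NJ Γ (Fml.atom n)) : NJ Γ (Fml.atom p) := by
  induction h generalizing Γ with
  | hyp hp => exact hS _ hp
  | app hr _ ih =>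
    refine NJ.concl_of_encRule (NJ.ax (hA ⟨_, hr, rfl⟩)) fun pr hpr => ?_
    refine NJ.encPrem_of_forall_superset fun Δ hΔ hdischarged => ih pr hpr (hA.trans hΔ) ?_
    rintro n (hn | hn)
    · exact (hS n hn).mono hΔ
    · exact hdischarged n hn

end Completeness

/-- encoding faithfulness: for any second-level atomic system
`A` and atom `p`: `⊢_A p` iff `⌊A⌋ ⊢ p` in IPL. -/
theorem encoding_faithful (A : Set ARule) (p : ℕ) :
    Deriv A ∅ p ↔ NJ (encRule '' A) (Fml.atom p) :=
  ⟨fun h => h.nj subset_rfl (by simp),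
    fun h => h.forces Deriv.monotone (w := ∅) fun _ ⟨_, hr, hψ⟩ => hψ ▸ forces_encRule hr ∅⟩
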